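/- For the type theory Glob (whose types are Obj and Hom A t u, whose only terms are variables, with the standard context, type, term and substitution judgments), the action of substitution is admissible: if Γ ⊢ A and Δ ⊢ γ : Γ then Δ ⊢ A[γ]; if Γ ⊢ t : A and Δ ⊢ γ : Γ then Δ ⊢ t[γ] : A[γ]; composition of derivable substitutions is derivable; and the identity substitution id_Γ is derivable for every derivable context Γ. -/

import Mathlib

namespace Glob

/-- Types of the theory `Glob`: `Obj` and `Hom A t u`, where terms are just variables
(represented as natural numbers). -/
inductive Ty : Type
  | obj : Ty
  | hom : Ty → ℕ → ℕ → Ty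
deriving DecidableEq

/-- Contexts: lists of typed variables (most recently declared variable first). -/
abbrev Ctx := List (ℕ × Ty)

/-- Substitutions: lists of variable/term assignments (most recent first). -/
abbrev Sub := List (ℕ × ℕ)

/-- Action of a substitution on a term (a variable). -/
def lookupSub (x : ℕ) : Sub → ℕ
  | [] => x
  | (y, u) :: γ => if x = y then u else lookupSub x γ

/-- Action of a substitution on a type. -/
def Ty.sub : Ty → Sub → Ty
  | .obj, _ => .obj
  | .hom A t u, γ => .hom (A.sub γ) (lookupSub t γ) (lookupSub u γ)

/-- Composition of substitutions. -/
def Sub.comp : Sub → Sub → Sub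
  | [], _ => []
  | (x, t) :: δ, γ => (x, lookupSub t γ) :: Sub.comp δ γ

/-- The identity substitution of a context. -/
def idSub (Γ : Ctx) : Sub := Γ.map (fun p => (p.1, p.1))

/-- The set of variables declared in a context. -/
def Ctx.domvars (Γ : Ctx) : Set ℕ := {x | ∃ A, (x, A) ∈ Γ}

mutual
  /-- Derivability of contexts in the theory `Glob`. -/
  inductive CtxDer : Ctx → Prop
    | nil : CtxDer []
    | ext {Γ : Ctx} {A : Ty} {x : ℕ} :
        CtxDer Γ → TyDer Γ A → x ∉ Ctx.domvars Γ → CtxDer ((x, A) :: Γ)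
  /-- Derivability of types. -/
  inductive TyDer : Ctx → Ty → Prop
    | obj {Γ : Ctx} : CtxDer Γ → TyDer Γ .obj
    | hom {Γ : Ctx} {A : Ty} {t u : ℕ} :
        TyDer Γ A → TmDer Γ t A → TmDer Γ u A → TyDer Γ (.hom A t u)
  /-- Derivability of terms. -/
  inductive TmDer : Ctx → ℕ → Ty → Prop
    | var {Γ : Ctx} {x : ℕ} {A : Ty} : CtxDer Γ → (x, A) ∈ Γ → TmDer Γ x A
  /-- Derivability of substitutions. -/
  inductive SubDer : Ctx → Sub → Ctx → Prop
    | nil {Δ : Ctx} : CtxDer Δ → SubDer Δ [] []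
    | cons {Δ : Ctx} {γ : Sub} {Γ : Ctx} {x : ℕ} {A : Ty} {t : ℕ} :
        SubDer Δ γ Γ → TyDer Γ A → x ∉ Ctx.domvars Γ → TmDer Δ t (A.sub γ) →
        SubDer Δ ((x, t) :: γ) ((x, A) :: Γ)
end

/-- The dimension of a type, shifted so that `dimN Obj = 0`
(the paper's dimension is `dimN - 1`). -/
def Ty.dimN : Ty → ℕ
  | .obj => 0
  | .hom A _ _ => A.dimN + 1

/-- The types `U_n` of the disk and sphere contexts. -/
def U : ℕ → Ty
  | 0 => .obj
  | n + 1 => .hom (U n) (2 * n) (2 * n + 1)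

/-- The sphere contexts; `SphC n` is the context `S^{n-1}` of the paper
(so that `SphC 0` is the empty context `S^{-1}`). -/
def SphC : ℕ → Ctx
  | 0 => []
  | n + 1 => (2 * n + 1, U n) :: (2 * n, U n) :: SphC n

/-- The disk contexts `D^n`. -/
def DiskC (n : ℕ) : Ctx := (2 * n, U n) :: SphC n

end Glob

/-! Terms are bare variables, so substitution acts by lookup and every claim is proved by
recursion on the codomain context. The one point that needs care is that the binding of a
variable `x` can be discarded from a substitution, `A[(x, t) :: γ] = A[γ]`, as soon as `A` is
derivable in a context not declaring `x`; the freshness side conditions of the rules, together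
with the fact that the types of a derivable context are derivable in it, supply exactly this. -/

namespace Glob

theorem SubDer.ctxDer {Δ Γ : Ctx} {γ : Sub} : SubDer Δ γ Γ → CtxDer Δ
  | .nil hΔ => hΔ
  | .cons _ _ _ (.var hΔ _) => hΔ

theorem TmDer.mem_domvars {Γ : Ctx} {t : ℕ} {A : Ty} : TmDer Γ t A → t ∈ Γ.domvars
  | .var _ hmem => ⟨A, hmem⟩

section Weakening

variable {Γ : Ctx} {p : ℕ × Ty}

theorem TmDer.weaken {t : ℕ} {A : Ty} (hp : CtxDer (p :: Γ)) : TmDer Γ t A → TmDer (p :: Γ) t A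
  | .var _ hmem => .var hp (List.mem_cons_of_mem p hmem)

theorem TyDer.weaken (hp : CtxDer (p :: Γ)) : ∀ {A : Ty}, TyDer Γ A → TyDer (p :: Γ) A
  | .obj, _ => .obj hp
  | .hom _ _ _, .hom hA ht hu => .hom (hA.weaken hp) (ht.weaken hp) (hu.weaken hp)

theorem SubDer.weaken (hp : CtxDer (p :: Γ)) :
    ∀ {Θ : Ctx} {θ : Sub}, SubDer Γ θ Θ → SubDer (p :: Γ) θ Θ
  | [], _, .nil _ => .nil hp
  | _ :: _, _, .cons hθ hA hx ht => .cons (hθ.weaken hp) hA hx (ht.weaken hp)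

end Weakening

theorem CtxDer.tyDer_of_mem : ∀ {Γ : Ctx} {x : ℕ} {A : Ty}, CtxDer Γ → (x, A) ∈ Γ → TyDer Γ A
  | [], _, _, _, hmem => absurd hmem List.not_mem_nil
  | _ :: _, _, _, hc@(.ext hΓ hB _), hmem => by
    rcases List.mem_cons.1 hmem with hhead | hmem
    · cases hhead
      exact hB.weaken hc
    · exact (hΓ.tyDer_of_mem hmem).weaken hc

theorem TyDer.sub_cons_of_not_mem_domvars {Γ : Ctx} {x t : ℕ} {γ : Sub} (hx : x ∉ Γ.domvars) :
    ∀ {A : Ty}, TyDer Γ A → A.sub ((x, t) :: γ) = A.sub γ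
  | .obj, _ => rfl
  | .hom _ u v, .hom hA hu hv => by
    have hux : u ≠ x := fun h => hx (h ▸ hu.mem_domvars)
    have hvx : v ≠ x := fun h => hx (h ▸ hv.mem_domvars)
    simp only [Ty.sub, lookupSub, if_neg hux, if_neg hvx, hA.sub_cons_of_not_mem_domvars hx]

theorem TmDer.sub : ∀ {Γ Δ : Ctx} {t : ℕ} {A : Ty} {γ : Sub},
    TmDer Γ t A → SubDer Δ γ Γ → TmDer Δ (lookupSub t γ) (A.sub γ)
  | [], _, _, _, _, .var _ hmem, _ => absurd hmem List.not_mem_nil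
  | (y, _) :: _, _, t, A, _, .var (.ext hΓ _ _) hmem, .cons hγ hB hy hs => by
    rcases List.mem_cons.1 hmem with hhead | hmem
    · cases hhead
      simpa only [lookupSub, ↓reduceIte, hB.sub_cons_of_not_mem_domvars hy] using hs
    · have hty : t ≠ y := fun h => hy (h ▸ ⟨A, hmem⟩)
      simpa only [lookupSub, if_neg hty, (hΓ.tyDer_of_mem hmem).sub_cons_of_not_mem_domvars hy]
        using (TmDer.var hΓ hmem).sub hγ

theorem TyDer.sub {Γ Δ : Ctx} {γ : Sub} (hγ : SubDer Δ γ Γ) : ∀ {A : Ty},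
    TyDer Γ A → TyDer Δ (A.sub γ)
  | .obj, _ => .obj hγ.ctxDer
  | .hom _ _ _, .hom hA ht hu => .hom (hA.sub hγ) (ht.sub hγ) (hu.sub hγ)

theorem lookupSub_comp {t : ℕ} (γ : Sub) :
    ∀ {θ : Sub}, t ∈ θ.map Prod.fst → lookupSub t (θ.comp γ) = lookupSub (lookupSub t θ) γ
  | [], ht => absurd ht List.not_mem_nil
  | (x, _) :: θ, ht => by
    by_cases htx : t = x
    · simp only [Sub.comp, lookupSub, if_pos htx]
    · have ht : t ∈ θ.map Prod.fst := by simpa [htx] using ht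
      simp only [Sub.comp, lookupSub, if_neg htx, lookupSub_comp γ ht]

theorem SubDer.map_fst : ∀ {Γ Θ : Ctx} {θ : Sub}, SubDer Γ θ Θ → θ.map Prod.fst = Θ.map Prod.fst
  | _, [], _, .nil _ => rfl
  | _, _ :: _, _, .cons hθ _ _ _ => by simp only [List.map_cons, hθ.map_fst]

theorem TyDer.sub_sub {Γ Θ : Ctx} {θ : Sub} (γ : Sub) (hθ : SubDer Γ θ Θ) :
    ∀ {A : Ty}, TyDer Θ A → (A.sub θ).sub γ = A.sub (θ.comp γ)
  | .obj, _ => rfl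
  | .hom _ u v, .hom hA hu hv => by
    have hdom {t : ℕ} {B : Ty} (ht : TmDer Θ t B) : t ∈ θ.map Prod.fst := by
      obtain ⟨_, hmem⟩ := ht.mem_domvars
      exact hθ.map_fst ▸ List.mem_map_of_mem (f := Prod.fst) hmem
    simp only [Ty.sub, hA.sub_sub γ hθ, lookupSub_comp γ (hdom hu), lookupSub_comp γ (hdom hv)]

theorem SubDer.comp {Γ Δ : Ctx} {γ : Sub} :
    ∀ {Θ : Ctx} {θ : Sub}, SubDer Γ θ Θ → SubDer Δ γ Γ → SubDer Δ (θ.comp γ) Θ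
  | [], _, .nil _, hγ => .nil hγ.ctxDer
  | _ :: _, _, .cons hθ hA hx ht, hγ => .cons (hθ.comp hγ) hA hx (hA.sub_sub γ hθ ▸ ht.sub hγ)

theorem lookupSub_idSub (x : ℕ) : ∀ Γ : Ctx, lookupSub x (idSub Γ) = x
  | [] => rfl
  | (y, _) :: Γ => by
    by_cases hxy : x = y
    · exact (if_pos hxy).trans hxy.symm
    · exact (if_neg hxy).trans (lookupSub_idSub x Γ)

theorem Ty.sub_idSub (Γ : Ctx) : ∀ A : Ty, A.sub (idSub Γ) = A
  | .obj => rfl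
  | .hom A _ _ => by simp only [Ty.sub, Ty.sub_idSub Γ A, lookupSub_idSub]

theorem CtxDer.subDer_idSub : ∀ {Γ : Ctx}, CtxDer Γ → SubDer Γ (idSub Γ) Γ
  | [], _ => .nil .nil
  | (_, A) :: _, hc@(.ext hΓ hA hx) =>
    .cons (hΓ.subDer_idSub.weaken hc) hA hx
      ((A.sub_idSub _).symm ▸ .var hc List.mem_cons_self)

end Glob

open Glob in
/-- Admissibility of the action of substitutions in the theory `Glob`: substitution on
types and terms preserves derivability, composition of derivable substitutions is
derivable, and the identity substitution of any derivable context is derivable. -/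
theorem glob_substitution_admissible :
    (∀ (Γ : Ctx) (A : Ty) (Δ : Ctx) (γ : Sub),
        TyDer Γ A → SubDer Δ γ Γ → TyDer Δ (A.sub γ)) ∧
    (∀ (Γ : Ctx) (t : ℕ) (A : Ty) (Δ : Ctx) (γ : Sub),
        TmDer Γ t A → SubDer Δ γ Γ → TmDer Δ (lookupSub t γ) (A.sub γ)) ∧
    (∀ (Γ : Ctx) (θ : Sub) (Θ : Ctx) (Δ : Ctx) (γ : Sub),
        SubDer Γ θ Θ → SubDer Δ γ Γ → SubDer Δ (Sub.comp θ γ) Θ) ∧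
    (∀ Γ : Ctx, CtxDer Γ → SubDer Γ (idSub Γ) Γ) :=
  ⟨fun _ _ _ _ hA hγ => hA.sub hγ,
   fun _ _ _ _ _ ht hγ => ht.sub hγ,
   fun _ _ _ _ _ hθ hγ => hθ.comp hγ,
   fun _ hΓ => hΓ.subDer_idSub⟩
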